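/- Generalized next operator via disjunction: for worlds {1,...,n}, m < n, i with 1 ≤ i ≤ n − m, F the set of size-k subsets of {1,...,n}, and D(a, m) = {S ∈ F : S ∩ {1,...,m} = a ∩ {1,...,m}} nonempty, the two sets {S ∈ D(a,m) : ∃ j, 1 ≤ j ≤ i ∧ (m + j) ∈ S} are equal whether defined directly or by the recursive unfolding via 'next or (certainly next ...)'; consequently the fraction of S ∈ D(a,m) containing some world among m+1,...,m+i is well defined and equals 1 − C(n − m − i, k − l)/C(n − m, k − l) when k − l ≤ n − m − i, where l = |a ∩ {1,...,m}|. -/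

import Mathlib

/-!
A set `S ∈ D(a, m)` is determined by its unobserved part `S \ {1, …, m}`, which is an arbitrary
`(k - l)`-subset of `{m + 1, …, n}`; `S` avoids the worlds `m + 1, …, m + i` exactly when this part
lies in `{m + i + 1, …, n}`. Hence `|D(a, m)| = C(n - m, k - l)`, the avoiding sets number
`C(n - m - i, k - l)`, and the sets hitting one of the next `i` worlds are the rest.
-/

/-- Recursive unfolding of "p happens within the next `i` steps after world `m`":
`hitsNext m (i+1) S` holds iff p holds at the next world `m+1`, or (certainly next)
p happens within the next `i` steps after world `m+1`. -/
def hitsNext : ℕ → ℕ → Finset ℕ → Bool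
  | _, 0, _ => false
  | m, i + 1, S => decide ((m + 1) ∈ S) || hitsNext (m + 1) i S

open Finset

theorem hitsNext_iff (m i : ℕ) (S : Finset ℕ) :
    hitsNext m i S = true ↔ ∃ j ∈ Icc 1 i, m + j ∈ S := by
  induction i generalizing m with
  | zero => simp [hitsNext]
  | succ i ih =>
    simp only [hitsNext, Bool.or_eq_true, decide_eq_true_eq, ih, mem_Icc]
    constructor
    · rintro (h | ⟨j, hj, hjS⟩)
      · exact ⟨1, by omega, h⟩
      · exact ⟨j + 1, by omega, by rwa [← add_assoc, add_right_comm]⟩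
    · rintro ⟨_ | j, hj, hjS⟩
      · omega
      · rcases j.eq_zero_or_pos with rfl | hj0
        · exact .inl hjS
        · exact .inr ⟨j, by omega, by rwa [add_right_comm, add_assoc]⟩

theorem card_filter_powersetCard_inter_eq {α : Type*} [DecidableEq α] {P B A : Finset α}
    {k : ℕ} (hAP : A ⊆ P) (hBP : Disjoint B P) (hAk : #A ≤ k) :
    #(((P ∪ B).powersetCard k).filter (fun S => S ∩ P = A)) = (#B).choose (k - #A) := by
  rw [← card_powersetCard]
  apply card_nbij' (· \ P) (A ∪ ·)
  · intro S hS
    simp only [coe_filter, mem_powersetCard, Set.mem_ofPred_eq, mem_coe] at hS ⊢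
    obtain ⟨⟨hSPB, hSk⟩, hSA⟩ := hS
    refine ⟨sdiff_le_iff.mpr hSPB, ?_⟩
    have := card_sdiff_add_card_inter S P
    rw [hSA] at this
    omega
  · intro T hT
    simp only [coe_filter, mem_powersetCard, Set.mem_ofPred_eq, mem_coe] at hT ⊢
    have hTP : Disjoint T P := hBP.mono_left hT.1
    refine ⟨⟨union_subset_union hAP hT.1, ?_⟩, ?_⟩
    · rw [card_union_of_disjoint (disjoint_of_subset_left hAP hTP.symm), hT.2]
      omega
    · rw [union_inter_distrib_right, inter_eq_left.mpr hAP,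
        disjoint_iff_inter_eq_empty.mp hTP, union_empty]
  · intro S hS
    simp only [coe_filter, Set.mem_ofPred_eq] at hS
    rw [← hS.2]
    exact (union_comm _ _).trans (sdiff_union_inter S P)
  · intro T hT
    rw [mem_coe, mem_powersetCard] at hT
    change (A ∪ T) \ P = T
    rw [union_sdiff_distrib, sdiff_eq_empty_iff_subset.mpr hAP, empty_union,
      sdiff_eq_self_of_disjoint (hBP.mono_left hT.1)]

theorem subset_Icc_and_not_exists_mem_iff {S : Finset ℕ} {m n i : ℕ} (hmn : m ≤ n) :
    (S ⊆ Icc 1 n ∧ ¬∃ j ∈ Icc 1 i, m + j ∈ S) ↔ S ⊆ Icc 1 m ∪ Ioc (m + i) n := by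
  simp only [subset_iff, mem_union, mem_Icc, mem_Ioc, not_exists, not_and]
  constructor
  · rintro ⟨hS, hout⟩ x hx
    have := hS hx
    by_cases hx' : m < x ∧ x ≤ m + i
    · have := hout (x - m) (by omega)
      rw [Nat.add_sub_cancel' (by omega)] at this
      contradiction
    · omega
  · intro hS
    refine ⟨fun x hx => ?_, fun j hj hjS => ?_⟩
    · have := hS hx
      omega
    · have := hS hjS
      omega

theorem stmt_9_general (n k m l i : ℕ) (hmn : m < n)
    (a : Finset ℕ)
    (hl : l = (a ∩ Finset.Icc 1 m).card)
    (hD : (((Finset.Icc 1 n).powersetCard k).filter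
        (fun S => S ∩ Finset.Icc 1 m = a ∩ Finset.Icc 1 m)).Nonempty)
    (hrem : k - l ≤ n - m - i) :
    (((((Finset.Icc 1 n).powersetCard k).filter
        (fun S => S ∩ Finset.Icc 1 m = a ∩ Finset.Icc 1 m)).filter
        (fun S => ∃ j ∈ Finset.Icc 1 i, (m + j) ∈ S))
      = ((((Finset.Icc 1 n).powersetCard k).filter
        (fun S => S ∩ Finset.Icc 1 m = a ∩ Finset.Icc 1 m)).filter
        (fun S => hitsNext m i S = true))) ∧
    ((((((Finset.Icc 1 n).powersetCard k).filter
        (fun S => S ∩ Finset.Icc 1 m = a ∩ Finset.Icc 1 m)).filter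
        (fun S => ∃ j ∈ Finset.Icc 1 i, (m + j) ∈ S)).card : ℚ)
      / ((((Finset.Icc 1 n).powersetCard k).filter
        (fun S => S ∩ Finset.Icc 1 m = a ∩ Finset.Icc 1 m)).card : ℚ)
      = 1 - (Nat.choose (n - m - i) (k - l) : ℚ) / (Nat.choose (n - m) (k - l) : ℚ)) := by
  set A := a ∩ Icc 1 m
  set D := ((Icc 1 n).powersetCard k).filter (fun S => S ∩ Icc 1 m = A)
  refine ⟨filter_congr fun S _ => (hitsNext_iff m i S).symm, ?_⟩
  have hlk : l ≤ k := by
    obtain ⟨S, hS⟩ := hD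
    rw [mem_filter, mem_powersetCard] at hS
    have hAS : A ⊆ S := hS.2 ▸ inter_subset_left
    exact hl ▸ hS.1.2 ▸ card_le_card hAS
  have card_avoid (r : ℕ) :
      #(D.filter fun S => ¬∃ j ∈ Icc 1 r, m + j ∈ S) = (n - m - r).choose (k - l) := by
    rw [Nat.sub_sub, ← Nat.card_Ioc, hl, ← card_filter_powersetCard_inter_eq inter_subset_right
      (disjoint_left.mpr fun x hx hx' => by simp only [mem_Ioc, mem_Icc] at hx hx'; omega)
      (hl ▸ hlk)]
    congr 1
    ext S
    simp only [D, mem_filter, mem_powersetCard, ← subset_Icc_and_not_exists_mem_iff hmn.le]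
    tauto
  have hDcard : #D = (n - m).choose (k - l) := by
    simpa using card_avoid 0
  have hsplit := card_filter_add_card_filter_not (s := D) (fun S => ∃ j ∈ Icc 1 i, m + j ∈ S)
  rw [card_avoid, hDcard] at hsplit
  have hpos : ((n - m).choose (k - l) : ℚ) ≠ 0 := by
    exact_mod_cast (Nat.choose_pos (by omega)).ne'
  rw [hDcard, eq_sub_iff_add_eq, ← add_div, ← Nat.cast_add, hsplit, div_self hpos]

theorem stmt_9 (n k m l i : ℕ) (hmn : m < n) (hkn : k ≤ n)
    (hi1 : 1 ≤ i) (hi : i ≤ n - m)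
    (a : Finset ℕ) (ha : a ⊆ Finset.Icc 1 n)
    (hl : l = (a ∩ Finset.Icc 1 m).card)
    (hD : (((Finset.Icc 1 n).powersetCard k).filter
        (fun S => S ∩ Finset.Icc 1 m = a ∩ Finset.Icc 1 m)).Nonempty)
    (hrem : k - l ≤ n - m - i) :
    (((((Finset.Icc 1 n).powersetCard k).filter
        (fun S => S ∩ Finset.Icc 1 m = a ∩ Finset.Icc 1 m)).filter
        (fun S => ∃ j ∈ Finset.Icc 1 i, (m + j) ∈ S))
      = ((((Finset.Icc 1 n).powersetCard k).filter
        (fun S => S ∩ Finset.Icc 1 m = a ∩ Finset.Icc 1 m)).filter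
        (fun S => hitsNext m i S = true))) ∧
    ((((((Finset.Icc 1 n).powersetCard k).filter
        (fun S => S ∩ Finset.Icc 1 m = a ∩ Finset.Icc 1 m)).filter
        (fun S => ∃ j ∈ Finset.Icc 1 i, (m + j) ∈ S)).card : ℚ)
      / ((((Finset.Icc 1 n).powersetCard k).filter
        (fun S => S ∩ Finset.Icc 1 m = a ∩ Finset.Icc 1 m)).card : ℚ)
      = 1 - (Nat.choose (n - m - i) (k - l) : ℚ) / (Nat.choose (n - m) (k - l) : ℚ)) :=
  stmt_9_general n k m l i hmn a hl hD hrem
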